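/- Suppose t ↦ X(t) is a solution of the system on the half-open interval (α, t0] with α > −∞. Then (i) there exists D > 0 such that for all t ∈ (α, t0], ∑_{r} ‖x_r(t)‖² + ∑_{r} ‖x_r′(t)‖² < D², and (ii) there exists L > 0 such that for all t ∈ (α, t0] and all pairs r ≠ s, ‖x_r(t) − x_s(t)‖ ≥ L. -/

import Mathlib

/-- The force acting on the `i`-th point of a configuration `X` of `m` points of `ℝ^m`,
for the adjacency matrix `h`:  `F_i(X) = ∑_{k ≠ i} (x_i − x_k)·(1/‖x_i − x_k‖² − h_{ik})`. -/
noncomputable def force (m : ℕ) (h : Matrix (Fin m) (Fin m) ℝ)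
    (X : Fin m → EuclideanSpace ℝ (Fin m)) (i : Fin m) : EuclideanSpace ℝ (Fin m) :=
  ∑ k ∈ Finset.univ.filter (fun k => k ≠ i), (1 / ‖X i - X k‖ ^ 2 - h i k) • (X i - X k)

/-- `X : ℝ → (ℝ^m)^m` is a solution of the system `x_i″ = F_i(X)` on the set `S ⊆ ℝ`:
its points are pairwise distinct at every `t ∈ S`, it is differentiable at every `t ∈ S`,
and its velocity `deriv` has derivative `F_i(X(t))` at every `t ∈ S`. -/
def IsSolution (m : ℕ) (h : Matrix (Fin m) (Fin m) ℝ) (S : Set ℝ)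
    (X : ℝ → Fin m → EuclideanSpace ℝ (Fin m)) : Prop :=
  (∀ t ∈ S, ∀ i k : Fin m, i ≠ k → X t i ≠ X t k) ∧
  (∀ i : Fin m, ∀ t ∈ S, DifferentiableAt ℝ (fun s => X s i) t) ∧
  (∀ i : Fin m, ∀ t ∈ S, HasDerivAt (deriv (fun s => X s i)) (force m h (X t) i) t)

/-- Kinetic energy of a tuple of velocities: `E_k(Y) = (1/2) ∑_r ‖y_r‖²`. -/
noncomputable def kineticEnergy (m : ℕ) (Y : Fin m → EuclideanSpace ℝ (Fin m)) : ℝ :=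
  (1 / 2) * ∑ r, ‖Y r‖ ^ 2

/-- Potential energy of a configuration:
`E_p(X) = −(1/2) ∑_{r<s} (log ‖x_r − x_s‖² − h_{rs}‖x_r − x_s‖²)`. -/
noncomputable def potentialEnergy (m : ℕ) (h : Matrix (Fin m) (Fin m) ℝ)
    (X : Fin m → EuclideanSpace ℝ (Fin m)) : ℝ :=
  -(1 / 2) * ∑ p ∈ Finset.univ.filter (fun p : Fin m × Fin m => p.1 < p.2),
      (Real.log (‖X p.1 - X p.2‖ ^ 2) - h p.1 p.2 * ‖X p.1 - X p.2‖ ^ 2)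

/-!
Along a solution the total energy `E_k + E_p` is conserved: the force is minus the gradient of
`E_p`. Since `h ≥ 0` and every squared distance is at most `R = 2G + 1`, where
`G = ∑ ‖x_r‖²`, each pair contributes at least `-(1/2) log R` to `E_p`. Hence the kinetic energy
is at most `E + (N/2) log R ≤ E + N G` (`N` the number of pairs), and `|G'| ≤ G + 2 E_k` becomes
a linear differential inequality for `G`. Grönwall's inequality, run backwards from `t₀` over the
bounded interval, bounds `G`, hence `R` and the velocities. Finally, with `R` now fixed,
`-(1/2) log ‖x_r - x_s‖²` is at most its pair's contribution, which is at most `E_p` minus the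
lower bounds of the other pairs, hence at most `E + (N/2) log R`: the points stay apart.
-/

open Finset Real Set
open scoped RealInnerProductSpace

lemma sum_sum_ne_eq_sum_lt {ι M : Type*} [Fintype ι] [LinearOrder ι] [AddCommMonoid M]
    (f : ι → ι → M) :
    ∑ i, ∑ j with j ≠ i, f i j = ∑ p : ι × ι with p.1 < p.2, (f p.1 p.2 + f p.2 p.1) := by
  have hswap : ∑ p : ι × ι with p.1 < p.2, f p.2 p.1 = ∑ p : ι × ι with p.2 < p.1, f p.1 p.2 :=
    sum_equiv (Equiv.prodComm ι ι) (by simp) (by simp)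
  rw [sum_add_distrib, hswap, ← sum_union (disjoint_filter.2 fun p _ h h' => lt_asymm h h'),
    ← filter_or, ← univ_product_univ, sum_filter, sum_product]
  simp only [sum_filter]
  refine sum_congr rfl fun i _ => sum_congr rfl fun j _ => ?_
  simp [ne_comm, lt_or_lt_iff_ne]

lemma norm_sub_sq_le_two_mul_sum_norm_sq {ι E : Type*} [Fintype ι] [DecidableEq ι]
    [SeminormedAddCommGroup E] (x : ι → E) {i j : ι} (hij : i ≠ j) : ‖x i - x j‖ ^ 2 ≤ 2 * ∑ k, ‖x k‖ ^ 2 :=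
  calc ‖x i - x j‖ ^ 2 ≤ (‖x i‖ + ‖x j‖) ^ 2 := by gcongr; exact norm_sub_le _ _
    _ ≤ 2 * (‖x i‖ ^ 2 + ‖x j‖ ^ 2) := add_sq_le
    _ = 2 * ∑ k ∈ {i, j}, ‖x k‖ ^ 2 := by rw [sum_pair hij]
    _ ≤ 2 * ∑ k, ‖x k‖ ^ 2 := by gcongr; exact subset_univ _

lemma abs_sum_two_mul_inner_le {ι E : Type*} [Fintype ι] [NormedAddCommGroup E]
    [InnerProductSpace ℝ E] (x v : ι → E) :
    |∑ i, 2 * ⟪x i, v i⟫| ≤ ∑ i, ‖x i‖ ^ 2 + ∑ i, ‖v i‖ ^ 2 := by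
  rw [← sum_add_distrib]
  refine (abs_sum_le_sum_abs _ _).trans (sum_le_sum fun i _ => ?_)
  rw [abs_mul, abs_two]
  nlinarith [abs_real_inner_le_norm (x i) (v i), two_mul_le_add_sq ‖x i‖ ‖v i‖]

theorem exists_norm_le_of_norm_deriv_le_on_Ioc {E : Type*} [NormedAddCommGroup E]
    [NormedSpace ℝ E] {f f' : ℝ → E} {K ε α t₀ : ℝ}
    (hf : ∀ t ∈ Ioc α t₀, HasDerivAt f (f' t) t)
    (bound : ∀ t ∈ Ioc α t₀, ‖f' t‖ ≤ K * ‖f t‖ + ε) :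
    ∃ C, ∀ t ∈ Ioc α t₀, ‖f t‖ ≤ C := by
  obtain ⟨C, hC⟩ := (isCompact_Icc (a := 0) (b := t₀ - α)).exists_bound_of_continuousOn
    (continuous_iff_continuousAt.2 fun s =>
      (hasDerivAt_gronwallBound ‖f t₀‖ K ε s).continuousAt).continuousOn
  refine ⟨C, fun t ht => ?_⟩
  have hmem : ∀ s ∈ Icc 0 (t₀ - t), t₀ - s ∈ Ioc α t₀ := fun s hs =>
    ⟨by linarith [ht.1, hs.2], by linarith [hs.1]⟩
  have hrev : ∀ s ∈ Icc 0 (t₀ - t), HasDerivAt (fun s => f (t₀ - s)) (-f' (t₀ - s)) s :=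
    fun s hs => (hf _ (hmem s hs)).comp_const_sub t₀ s
  have hgronwall := norm_le_gronwallBound_of_norm_deriv_right_le (δ := ‖f t₀‖)
    (fun s hs => (hrev s hs).continuousAt.continuousWithinAt)
    (fun s hs => (hrev s (Ico_subset_Icc_self hs)).hasDerivWithinAt) (by simp)
    (fun s hs => by simpa using bound _ (hmem s (Ico_subset_Icc_self hs)))
    (t₀ - t) ⟨sub_nonneg.2 ht.2, le_rfl⟩
  simp only [sub_sub_cancel, sub_zero] at hgronwall
  exact hgronwall.trans ((le_abs_self _).trans
    (hC _ ⟨sub_nonneg.2 ht.2, by linarith [ht.1]⟩))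

section
variable {m : ℕ} {h : Matrix (Fin m) (Fin m) ℝ}

lemma sum_inner_force (hsymm : ∀ i k, h i k = h k i) (x v : Fin m → EuclideanSpace ℝ (Fin m)) :
    ∑ r, ⟪force m h x r, v r⟫ = ∑ p : Fin m × Fin m with p.1 < p.2,
      (1 / ‖x p.1 - x p.2‖ ^ 2 - h p.1 p.2) * ⟪x p.1 - x p.2, v p.1 - v p.2⟫ := by
  simp only [force, sum_inner, real_inner_smul_left]
  rw [sum_sum_ne_eq_sum_lt]
  refine sum_congr rfl fun p _ => ?_
  rw [norm_sub_rev (x p.2), hsymm p.2 p.1, ← neg_sub (x p.1), inner_neg_left, inner_sub_right]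
  ring

lemma hasDerivAt_kineticEnergy {V : ℝ → Fin m → EuclideanSpace ℝ (Fin m)}
    {A : Fin m → EuclideanSpace ℝ (Fin m)} {t : ℝ}
    (hV : ∀ r, HasDerivAt (fun τ => V τ r) (A r) t) :
    HasDerivAt (fun τ => kineticEnergy m (V τ)) (∑ r, ⟪V t r, A r⟫) t := by
  have := (HasDerivAt.fun_sum (u := univ) fun r _ => (hV r).norm_sq).const_mul (1 / 2 : ℝ)
  simpa [kineticEnergy, mul_sum, ← mul_assoc] using this

lemma hasDerivAt_potentialEnergy {X : ℝ → Fin m → EuclideanSpace ℝ (Fin m)}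
    {v : Fin m → EuclideanSpace ℝ (Fin m)} {t : ℝ}
    (hX : ∀ r, HasDerivAt (fun τ => X τ r) (v r) t) (hne : ∀ i k, i ≠ k → X t i ≠ X t k) :
    HasDerivAt (fun τ => potentialEnergy m h (X τ))
      (-∑ p : Fin m × Fin m with p.1 < p.2,
        (1 / ‖X t p.1 - X t p.2‖ ^ 2 - h p.1 p.2) * ⟪X t p.1 - X t p.2, v p.1 - v p.2⟫) t := by
  have hpair : ∀ p : Fin m × Fin m, p.1 < p.2 → HasDerivAt
      (fun τ => Real.log (‖X τ p.1 - X τ p.2‖ ^ 2) - h p.1 p.2 * ‖X τ p.1 - X τ p.2‖ ^ 2)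
      (2 * ((1 / ‖X t p.1 - X t p.2‖ ^ 2 - h p.1 p.2) * ⟪X t p.1 - X t p.2, v p.1 - v p.2⟫))
      t := by
    intro p hp
    have hsq := ((hX p.1).fun_sub (hX p.2)).norm_sq
    have hpos : ‖X t p.1 - X t p.2‖ ^ 2 ≠ 0 := by
      simpa [sub_eq_zero] using hne _ _ hp.ne
    exact ((hsq.log hpos).fun_sub (hsq.const_mul _)).congr_deriv (by field_simp)
  have := (HasDerivAt.fun_sum (u := {p : Fin m × Fin m | p.1 < p.2})
    fun p hp => hpair p (by simpa using hp)).const_mul (-(1 / 2 : ℝ))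
  exact this.congr_deriv (by rw [← mul_sum]; ring)

lemma kineticEnergy_nonneg (v : Fin m → EuclideanSpace ℝ (Fin m)) : 0 ≤ kineticEnergy m v :=
  mul_nonneg (by norm_num) (sum_nonneg fun r _ => sq_nonneg ‖v r‖)

noncomputable def totalEnergy (m : ℕ) (h : Matrix (Fin m) (Fin m) ℝ)
    (X : ℝ → Fin m → EuclideanSpace ℝ (Fin m)) (t : ℝ) : ℝ :=
  kineticEnergy m (fun r => deriv (fun s => X s r) t) + potentialEnergy m h (X t)

noncomputable def pairPotential (h : Matrix (Fin m) (Fin m) ℝ)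
    (x : Fin m → EuclideanSpace ℝ (Fin m)) (p : Fin m × Fin m) : ℝ :=
  -(1 / 2) * (Real.log (‖x p.1 - x p.2‖ ^ 2) - h p.1 p.2 * ‖x p.1 - x p.2‖ ^ 2)

lemma potentialEnergy_add_card_mul (x : Fin m → EuclideanSpace ℝ (Fin m)) (c : ℝ) :
    potentialEnergy m h x + #{p : Fin m × Fin m | p.1 < p.2} * c =
      ∑ p : Fin m × Fin m with p.1 < p.2, (pairPotential h x p + c) := by
  rw [sum_add_distrib, sum_const, nsmul_eq_mul, potentialEnergy, mul_sum]
  rfl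

lemma neg_half_log_le_pairPotential {x : Fin m → EuclideanSpace ℝ (Fin m)} {p : Fin m × Fin m}
    (hh : 0 ≤ h p.1 p.2) : -(1 / 2) * Real.log (‖x p.1 - x p.2‖ ^ 2) ≤ pairPotential h x p := by
  unfold pairPotential
  nlinarith [mul_nonneg hh (sq_nonneg ‖x p.1 - x p.2‖)]

lemma pairPotential_add_half_log_nonneg {x : Fin m → EuclideanSpace ℝ (Fin m)}
    {p : Fin m × Fin m} {R : ℝ} (hh : 0 ≤ h p.1 p.2) (hne : x p.1 ≠ x p.2)
    (hR : ‖x p.1 - x p.2‖ ^ 2 ≤ R) : 0 ≤ pairPotential h x p + Real.log R / 2 := by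
  have hpos : 0 < ‖x p.1 - x p.2‖ ^ 2 := by
    have := sub_ne_zero.2 hne
    positivity
  linarith [log_le_log hpos hR, neg_half_log_le_pairPotential (x := x) hh]

section PotentialBounds

variable {x : Fin m → EuclideanSpace ℝ (Fin m)} {R : ℝ} (hh : ∀ i k, 0 ≤ h i k)
  (hx : ∀ i k, i ≠ k → x i ≠ x k) (hR : ∀ i k, i ≠ k → ‖x i - x k‖ ^ 2 ≤ R)
include hh hx hR

lemma neg_card_mul_log_le_two_mul_potentialEnergy :
    -(#{p : Fin m × Fin m | p.1 < p.2} * Real.log R) ≤ 2 * potentialEnergy m h x := by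
  have hsum := potentialEnergy_add_card_mul (h := h) x (Real.log R / 2)
  have hnonneg : 0 ≤ ∑ p : Fin m × Fin m with p.1 < p.2, (pairPotential h x p + Real.log R / 2) :=
    sum_nonneg fun p hp => pairPotential_add_half_log_nonneg (hh _ _)
      (hx _ _ (mem_filter.1 hp).2.ne) (hR _ _ (mem_filter.1 hp).2.ne)
  linarith

lemma log_sub_log_norm_sub_sq_le {i k : Fin m} (hik : i ≠ k) :
    Real.log R - Real.log (‖x i - x k‖ ^ 2) ≤
      2 * potentialEnergy m h x + #{p : Fin m × Fin m | p.1 < p.2} * Real.log R := by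
  wlog hlt : i < k generalizing i k
  · rw [norm_sub_rev]
    exact this hik.symm (hik.lt_or_gt.resolve_left hlt)
  have hsingle := single_le_sum (s := {p : Fin m × Fin m | p.1 < p.2})
    (f := fun p => pairPotential h x p + Real.log R / 2)
    (fun p hp => pairPotential_add_half_log_nonneg (hh _ _)
      (hx _ _ (mem_filter.1 hp).2.ne) (hR _ _ (mem_filter.1 hp).2.ne))
    (mem_filter.2 ⟨mem_univ (i, k), hlt⟩)
  rw [← potentialEnergy_add_card_mul] at hsingle
  linarith [neg_half_log_le_pairPotential (x := x) (p := (i, k)) (hh i k)]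

end PotentialBounds

namespace IsSolution

variable {S : Set ℝ} {X : ℝ → Fin m → EuclideanSpace ℝ (Fin m)}

lemma hasDerivAt_totalEnergy (hsymm : ∀ i k, h i k = h k i) (hX : IsSolution m h S X)
    {t : ℝ} (ht : t ∈ S) : HasDerivAt (totalEnergy m h X) 0 t := by
  have hK := hasDerivAt_kineticEnergy (V := fun τ r => deriv (fun s => X s r) τ)
    fun r => hX.2.2 r t ht
  have hP := hasDerivAt_potentialEnergy (h := h) (fun r => (hX.2.1 r t ht).hasDerivAt) (hX.1 t ht)
  have hbalance := sum_inner_force hsymm (X t) fun r => deriv (fun s => X s r) t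
  refine (hK.add hP).congr_deriv ?_
  rw [← hbalance, add_neg_eq_zero]
  exact sum_congr rfl fun r _ => real_inner_comm _ _

lemma totalEnergy_eq (hsymm : ∀ i k, h i k = h k i) (hX : IsSolution m h S X) [S.OrdConnected]
    {a b : ℝ} (ha : a ∈ S) (hb : b ∈ S) : totalEnergy m h X a = totalEnergy m h X b := by
  wlog hab : a ≤ b generalizing a b
  · exact (this hb ha (le_of_not_ge hab)).symm
  have hderiv : ∀ t ∈ Icc a b, HasDerivAt (totalEnergy m h X) 0 t := fun t ht =>
    hX.hasDerivAt_totalEnergy hsymm (S.Icc_subset ha hb ht)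
  exact (constant_of_has_deriv_right_zero
    (fun t ht => (hderiv t ht).continuousAt.continuousWithinAt)
    (fun t ht => (hderiv t (Ico_subset_Icc_self ht)).hasDerivWithinAt) b ⟨hab, le_rfl⟩).symm

section Bounds

variable (hsymm : ∀ i k, h i k = h k i) (hh : ∀ i k, 0 ≤ h i k)
include hsymm hh

lemma sum_norm_deriv_sq_le (hX : IsSolution m h S X) [S.OrdConnected] {t t₁ R : ℝ}
    (ht : t ∈ S) (ht₁ : t₁ ∈ S) (hR : ∀ i k, i ≠ k → ‖X t i - X t k‖ ^ 2 ≤ R) :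
    ∑ r, ‖deriv (fun s => X s r) t‖ ^ 2 ≤
      2 * totalEnergy m h X t₁ + #{p : Fin m × Fin m | p.1 < p.2} * Real.log R := by
  have hP := neg_card_mul_log_le_two_mul_potentialEnergy hh (hX.1 t ht) hR
  rw [← hX.totalEnergy_eq hsymm ht ht₁, totalEnergy, kineticEnergy]
  linarith

lemma exp_le_norm_sub_sq (hX : IsSolution m h S X) [S.OrdConnected] {t t₁ R : ℝ}
    (ht : t ∈ S) (ht₁ : t₁ ∈ S) (hR : ∀ i k, i ≠ k → ‖X t i - X t k‖ ^ 2 ≤ R)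
    {i k : Fin m} (hik : i ≠ k) :
    exp (Real.log R - 2 * totalEnergy m h X t₁ - #{p : Fin m × Fin m | p.1 < p.2} * Real.log R)
      ≤ ‖X t i - X t k‖ ^ 2 := by
  have hpos : 0 < ‖X t i - X t k‖ ^ 2 := by
    have := sub_ne_zero.2 (hX.1 t ht i k hik)
    positivity
  have hK := kineticEnergy_nonneg (fun r => deriv (fun s => X s r) t)
  have hlog := log_sub_log_norm_sub_sq_le hh (hX.1 t ht) hR hik
  rw [← le_log_iff_exp_le hpos, ← hX.totalEnergy_eq hsymm ht ht₁, totalEnergy]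
  linarith

lemma exists_sum_norm_sq_le {α t₀ : ℝ} (hX : IsSolution m h (Ioc α t₀) X) :
    ∃ C, ∀ t ∈ Ioc α t₀, ∑ r, ‖X t r‖ ^ 2 ≤ C := by
  rcases (Ioc α t₀).eq_empty_or_nonempty with hS | ⟨t₁, ht₁⟩
  · exact ⟨0, by simp [hS]⟩
  have hderiv : ∀ t ∈ Ioc α t₀, HasDerivAt (fun t => ∑ r, ‖X t r‖ ^ 2)
      (∑ r, 2 * ⟪X t r, deriv (fun s => X s r) t⟫) t := fun t ht =>
    HasDerivAt.fun_sum fun r _ => (hX.2.1 r t ht).hasDerivAt.norm_sq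
  set N : ℝ := ((#{p : Fin m × Fin m | p.1 < p.2} : ℕ) : ℝ)
  have hbound : ∀ t ∈ Ioc α t₀, ‖∑ r, 2 * ⟪X t r, deriv (fun s => X s r) t⟫‖ ≤
      (2 * N + 1) * ‖∑ r, ‖X t r‖ ^ 2‖ + 2 * totalEnergy m h X t₁ := by
    intro t ht
    set G := ∑ r, ‖X t r‖ ^ 2
    have hG : 0 ≤ G := by positivity
    have hv := hX.sum_norm_deriv_sq_le hsymm hh ht ht₁ (R := 2 * G + 1) fun i k hik =>
      (norm_sub_sq_le_two_mul_sum_norm_sq _ hik).trans (by linarith)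
    have hlog : Real.log (2 * G + 1) ≤ 2 * G := by
      linarith [log_le_sub_one_of_pos (by positivity : 0 < 2 * G + 1)]
    have hN : 0 ≤ N := by positivity
    rw [Real.norm_eq_abs, Real.norm_eq_abs, abs_of_nonneg hG]
    calc _ ≤ G + ∑ r, ‖deriv (fun s => X s r) t‖ ^ 2 := abs_sum_two_mul_inner_le _ _
      _ ≤ (2 * N + 1) * G + 2 * totalEnergy m h X t₁ := by nlinarith
  obtain ⟨C, hC⟩ := exists_norm_le_of_norm_deriv_le_on_Ioc hderiv hbound
  exact ⟨C, fun t ht => (le_abs_self _).trans (hC t ht)⟩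

end Bounds

end IsSolution

end

theorem solution_bounded_separated_on_Ioc_general (m : ℕ)
    (h : Matrix (Fin m) (Fin m) ℝ)
    (hsymm : ∀ i k, h i k = h k i)
    (h01 : ∀ i k, h i k = 0 ∨ h i k = 1)
    (α t₀ : ℝ) (X : ℝ → Fin m → EuclideanSpace ℝ (Fin m))
    (hX : IsSolution m h (Set.Ioc α t₀) X) :
    (∃ D > (0 : ℝ), ∀ t ∈ Set.Ioc α t₀,
        (∑ r, ‖X t r‖ ^ 2) + ∑ r, ‖deriv (fun s => X s r) t‖ ^ 2 < D ^ 2) ∧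
      ∃ L > (0 : ℝ), ∀ t ∈ Set.Ioc α t₀, ∀ r s : Fin m, r ≠ s → L ≤ ‖X t r - X t s‖ := by
  have hh : ∀ i k, 0 ≤ h i k := fun i k => by rcases h01 i k with hik | hik <;> simp [hik]
  rcases (Ioc α t₀).eq_empty_or_nonempty with hS | ⟨t₁, ht₁⟩
  · exact ⟨⟨1, one_pos, by simp [hS]⟩, ⟨1, one_pos, by simp [hS]⟩⟩
  obtain ⟨C, hC⟩ := hX.exists_sum_norm_sq_le hsymm hh
  have hR : ∀ t ∈ Ioc α t₀, ∀ i k, i ≠ k → ‖X t i - X t k‖ ^ 2 ≤ 2 * C + 1 :=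
    fun t ht i k hik => (norm_sub_sq_le_two_mul_sum_norm_sq _ hik).trans (by linarith [hC t ht])
  set E₁ := totalEnergy m h X t₁
  set N : ℝ := ((#{p : Fin m × Fin m | p.1 < p.2} : ℕ) : ℝ)
  set B := C + (2 * E₁ + N * Real.log (2 * C + 1))
  refine ⟨⟨|B| + 1, by positivity, fun t ht => ?_⟩,
    ⟨√(exp (Real.log (2 * C + 1) - 2 * E₁ - N * Real.log (2 * C + 1))), by positivity,
      fun t ht i k hik => ?_⟩⟩
  · calc _ ≤ B := add_le_add (hC t ht) (hX.sum_norm_deriv_sq_le hsymm hh ht ht₁ (hR t ht))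
      _ < (|B| + 1) ^ 2 := by nlinarith [le_abs_self B, abs_nonneg B]
  · calc _ ≤ √(‖X t i - X t k‖ ^ 2) :=
          sqrt_le_sqrt (hX.exp_le_norm_sub_sq hsymm hh ht ht₁ (hR t ht) hik)
      _ = ‖X t i - X t k‖ := sqrt_sq (norm_nonneg _)

/-- A solution of the system on `(α, t₀]` with `α > −∞` is bounded together with its
velocity, and its points stay uniformly separated. -/
theorem solution_bounded_separated_on_Ioc (m : ℕ) (hm : 2 ≤ m)
    (h : Matrix (Fin m) (Fin m) ℝ)
    (hsymm : ∀ i k, h i k = h k i) (hdiag : ∀ i, h i i = 0)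
    (h01 : ∀ i k, h i k = 0 ∨ h i k = 1)
    (α t₀ : ℝ) (X : ℝ → Fin m → EuclideanSpace ℝ (Fin m))
    (hX : IsSolution m h (Set.Ioc α t₀) X) :
    (∃ D > (0 : ℝ), ∀ t ∈ Set.Ioc α t₀,
        (∑ r, ‖X t r‖ ^ 2) + ∑ r, ‖deriv (fun s => X s r) t‖ ^ 2 < D ^ 2) ∧
      ∃ L > (0 : ℝ), ∀ t ∈ Set.Ioc α t₀, ∀ r s : Fin m, r ≠ s → L ≤ ‖X t r - X t s‖ :=
  solution_bounded_separated_on_Ioc_general m h hsymm h01 α t₀ X hX
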